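/- If a sequence of real numbers (r_n) converges classically to a dyadic rational r and r_n > r for all but finitely many n, then the s-limit of the sign expansions is the sign expansion of r + 1/ω (the expansion of r followed by ω minuses). -/

import Mathlib

open scoped Classical

noncomputable def slim {L M A : Type*} [LinearOrder L] [LinearOrder M]
    (a : L → M → Option A) : M → Option A := fun m =>
  if h : ∃ l0 : L, ∀ m' ≤ m, ∀ l, l0 ≤ l → ∀ l', l0 ≤ l' →
      a l m' = a l' m' ∧ (a l m').isSome
  then a h.choose m else none

noncomputable def slimIio {A : Type*} (α : Ordinal) (s : Ordinal → Ordinal → Option A) :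
    Ordinal → Option A :=
  slim (L := Set.Iio α) (fun β => s β.1)

abbrev SignStr := Ordinal → Option Bool

def signVal : Option Bool → ℕ
  | none => 1
  | some false => 0
  | some true => 2

def strLT (s t : SignStr) : Prop :=
  ∃ γ, (∀ β < γ, s β = t β) ∧ signVal (s γ) < signVal (t γ)

def strLE (s t : SignStr) : Prop := s = t ∨ strLT s t

noncomputable def ordStr (α : Ordinal) : SignStr := fun γ => if γ < α then some true else none

noncomputable def strLength {A : Type*} (a : Ordinal → Option A) : Ordinal :=
  sInf {γ | a γ = none}

noncomputable def strAppend {A : Type*} (a b : Ordinal → Option A) : Ordinal → Option A :=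
  fun γ => if γ < strLength a then a γ else b (γ - strLength a)

noncomputable def oneOverOmega : SignStr := fun γ =>
  if γ = 0 then some true else if γ < Ordinal.omega0 then some false else none

noncomputable def negOneOverOmega : SignStr := fun γ =>
  if γ = 0 then some false else if γ < Ordinal.omega0 then some true else none

def IsDyadic (x : ℝ) : Prop := ∃ (k : ℤ) (m : ℕ), x = k / 2 ^ m

noncomputable def cand : Option ℝ × Option ℝ → ℝ
  | (none, none) => 0
  | (some l, none) => l + 1
  | (none, some u) => u - 1
  | (some l, some u) => (l + u) / 2

noncomputable def signState (r : ℝ) : ℕ → Option ℝ × Option ℝ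
  | 0 => (none, none)
  | n + 1 =>
      let st := signState r n
      let c := cand st
      if c < r then (some c, st.2)
      else if r < c then (st.1, some c)
      else st

noncomputable def signAt (r : ℝ) (n : ℕ) : Option Bool :=
  let c := cand (signState r n)
  if c < r then some true else if r < c then some false else none

noncomputable def signExp (r : ℝ) : SignStr := fun γ =>
  if h : ∃ n : ℕ, γ = (n : Ordinal) then signAt r h.choose else none

/-!
For dyadic `x = p / 2 ^ m` the search behind `signState` proposes `x` itself after finitely many
stages `N`: it walks through the integers until it brackets `x`, then bisects intervals of the
grid `2⁻ᵐ ℤ`, and such an interval of width `2⁻ᵐ` cannot contain `x` in its interior.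
The comparisons made before stage `N` are strict, hence shared by every `y` near `x`. For `y`
slightly above `x` the candidate at stage `N` is `x < y`, giving `+`; afterwards the lower bound
is `x` and the candidates `x + d / 2 ^ k` stay above `y` as long as `y < x + d / 2 ^ k`, giving
`-`. So at every finite position the signs of `r n` eventually agree with those of `x + 1/ω`, and
beyond `ω` both sides are undefined.
-/

open Filter Topology Ordinal

section Slim

variable {L M A : Type*} [LinearOrder L] [LinearOrder M] {a : L → M → Option A} {m : M}

theorem slim_apply_eq_of_eventually [Nonempty L] {b : M → Option A}
    (h : ∀ᶠ l in atTop, ∀ m' ≤ m, a l m' = b m' ∧ (b m').isSome) : slim a m = b m := by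
  obtain ⟨l₀, hl₀⟩ := eventually_atTop.1 h
  have hstable : ∃ l₀ : L, ∀ m' ≤ m, ∀ l, l₀ ≤ l → ∀ l', l₀ ≤ l' →
      a l m' = a l' m' ∧ (a l m').isSome := ⟨l₀, fun m' hm' l hl l' hl' => by
    rw [(hl₀ l hl m' hm').1, (hl₀ l' hl' m' hm').1]; exact ⟨rfl, (hl₀ l hl m' hm').2⟩⟩
  rw [slim, dif_pos hstable]
  set l₁ := hstable.choose
  rw [(hstable.choose_spec m le_rfl l₁ le_rfl (max l₁ l₀) (le_max_left _ _)).1,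
    (hl₀ _ (le_max_right _ _) m le_rfl).1]

theorem slim_apply_eq_none (h : ∀ l, a l m = none) : slim a m = none := by
  rw [slim, dif_neg]
  rintro ⟨l₀, hl₀⟩
  simpa [h] using (hl₀ m le_rfl l₀ le_rfl l₀ le_rfl).2

end Slim

section SignAlgorithm

noncomputable def signStep (r : ℝ) (st : Option ℝ × Option ℝ) : Option ℝ × Option ℝ :=
  if cand st < r then (some (cand st), st.2) else if r < cand st then (st.1, some (cand st)) else st

variable {r r' : ℝ} {st : Option ℝ × Option ℝ}

theorem signState_succ (n : ℕ) : signState r (n + 1) = signStep r (signState r n) := rfl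

theorem signState_eq_iterate (n : ℕ) : signState r n = (signStep r)^[n] (none, none) := by
  induction n with
  | zero => rfl
  | succ n ih => rw [signState_succ, ih, Function.iterate_succ_apply']

theorem signStep_of_cand_lt (h : cand st < r) : signStep r st = (some (cand st), st.2) :=
  if_pos h

theorem signStep_of_lt_cand (h : r < cand st) : signStep r st = (st.1, some (cand st)) := by
  rw [signStep, if_neg h.not_gt, if_pos h]

theorem signStep_congr (h₁ : cand st < r ↔ cand st < r') (h₂ : r < cand st ↔ r' < cand st) :
    signStep r st = signStep r' st := by
  simp only [signStep, h₁, h₂]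

theorem signAt_congr {n : ℕ} (hst : signState r n = signState r' n)
    (h₁ : cand (signState r n) < r ↔ cand (signState r n) < r')
    (h₂ : r < cand (signState r n) ↔ r' < cand (signState r n)) :
    signAt r n = signAt r' n := by
  simp only [signAt, ← hst, h₁, h₂]

theorem signAt_of_cand_lt {n : ℕ} (h : cand (signState r n) < r) : signAt r n = some true := by
  simp [signAt, h]

theorem signAt_of_lt_cand {n : ℕ} (h : r < cand (signState r n)) : signAt r n = some false := by
  simp [signAt, h, h.not_gt]

theorem signAt_eq_none_iff {n : ℕ} : signAt r n = none ↔ cand (signState r n) = r := by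
  rcases lt_trichotomy (cand (signState r n)) r with h | h | h
  · simp [signAt_of_cand_lt h, h.ne]
  · simp [signAt, h]
  · simp [signAt_of_lt_cand h, h.ne']

theorem lt_of_signState_snd_eq_some {n : ℕ} {u : ℝ} (h : (signState r n).2 = some u) : r < u := by
  induction n generalizing u with
  | zero => simp [signState] at h
  | succ n ih =>
    rw [signState_succ, signStep] at h
    split_ifs at h with h₁ h₂
    · exact ih h
    · cases h; exact h₂
    · exact ih h

theorem signExp_natCast (n : ℕ) : signExp r n = signAt r n := by
  have h : ∃ k : ℕ, (n : Ordinal) = k := ⟨n, rfl⟩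
  rw [signExp, dif_pos h, Nat.cast_injective h.choose_spec.symm]

theorem signExp_of_omega0_le {γ : Ordinal} (h : ω ≤ γ) : signExp r γ = none := by
  rw [signExp, dif_neg]
  rintro ⟨n, rfl⟩
  exact h.not_gt (Ordinal.natCast_lt_omega0 n)

end SignAlgorithm

section Termination

def Halts (x : ℝ) (st : Option ℝ × Option ℝ) : Prop :=
  ∃ n, cand ((signStep x)^[n] st) = x

variable {x : ℝ} {st : Option ℝ × Option ℝ}

theorem Halts.of_signStep (h : Halts x (signStep x st)) : Halts x st :=
  let ⟨n, hn⟩ := h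
  ⟨n + 1, by rwa [Function.iterate_succ_apply]⟩

theorem halts_of_cases (h₁ : cand st < x → Halts x (some (cand st), st.2))
    (h₂ : x < cand st → Halts x (st.1, some (cand st))) : Halts x st := by
  rcases lt_trichotomy (cand st) x with h | h | h
  · exact .of_signStep (signStep_of_cand_lt h ▸ h₁ h)
  · exact ⟨0, h⟩
  · exact .of_signStep (signStep_of_lt_cand h ▸ h₂ h)

open AddSubgroup

theorem notMem_Ioo_of_mem_zmultiples {δ l : ℝ} (hδ : 0 < δ) (hl : l ∈ zmultiples δ)
    (hx : x ∈ zmultiples δ) : x ∉ Set.Ioo l (l + δ) := by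
  rintro ⟨h₁, h₂⟩
  obtain ⟨k, hk⟩ := mem_zmultiples_iff.1 (sub_mem hx hl)
  rw [zsmul_eq_mul] at hk
  have hk₀ : 0 < k := by exact_mod_cast pos_of_mul_pos_left (hk ▸ sub_pos.2 h₁) hδ.le
  have hk₁ : k < 1 := by
    exact_mod_cast lt_of_mul_lt_mul_right (a := δ) (by linarith : (k : ℝ) * δ < 1 * δ) hδ.le
  omega

theorem halts_bisect {δ : ℝ} (hδ : 0 < δ) (hx : x ∈ zmultiples δ) (k : ℕ) :
    ∀ l ∈ zmultiples δ, l < x → x < l + 2 ^ k * δ → Halts x (some l, some (l + 2 ^ k * δ)) := by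
  induction k with
  | zero =>
    intro l hl h₁ h₂
    exact absurd ⟨h₁, by simpa using h₂⟩ (notMem_Ioo_of_mem_zmultiples hδ hl hx)
  | succ k ih =>
    intro l hl h₁ h₂
    have hmem : 2 ^ k * δ ∈ zmultiples δ := by
      simpa using nsmul_mem (mem_zmultiples δ) (2 ^ k)
    have hmid : cand (some l, some (l + 2 ^ (k + 1) * δ)) = l + 2 ^ k * δ := by
      simp only [cand]; ring
    refine halts_of_cases (fun h => ?_) (fun h => ?_) <;> rw [hmid] at h ⊢
    · have hu : l + 2 ^ (k + 1) * δ = l + 2 ^ k * δ + 2 ^ k * δ := by ring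
      rw [hu] at h₂ ⊢
      exact ih _ (add_mem hl hmem) h h₂
    · exact ih l hl h₁ h

theorem two_pow_mul_inv_two_pow (m : ℕ) : (2 : ℝ) ^ m * ((2 : ℝ) ^ m)⁻¹ = 1 :=
  mul_inv_cancel₀ (pow_ne_zero m two_ne_zero)

theorem one_mem_zmultiples_inv_two_pow (m : ℕ) : (1 : ℝ) ∈ zmultiples ((2 : ℝ) ^ m)⁻¹ := by
  simpa [two_pow_mul_inv_two_pow] using nsmul_mem (mem_zmultiples ((2 : ℝ) ^ m)⁻¹) (2 ^ m)

theorem halts_walk_up {m : ℕ} (hx : x ∈ zmultiples ((2 : ℝ) ^ m)⁻¹) (n : ℕ) :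
    ∀ l ∈ zmultiples ((2 : ℝ) ^ m)⁻¹, l < x → x ≤ l + n → Halts x (some l, none) := by
  induction n with
  | zero =>
    intro l _ h₁ h₂
    rw [Nat.cast_zero, add_zero] at h₂
    exact absurd h₁ h₂.not_gt
  | succ n ih =>
    intro l hl h₁ h₂
    have hc : cand (some l, none) = l + 1 := rfl
    refine halts_of_cases (fun h => ?_) (fun h => ?_) <;> rw [hc] at h ⊢
    · exact ih _ (add_mem hl (one_mem_zmultiples_inv_two_pow m)) h (by push_cast at h₂; linarith)
    · have := halts_bisect (by positivity) hx m l hl h₁ (by rwa [two_pow_mul_inv_two_pow])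
      rwa [two_pow_mul_inv_two_pow] at this

theorem halts_walk_down {m : ℕ} (hx : x ∈ zmultiples ((2 : ℝ) ^ m)⁻¹) (n : ℕ) :
    ∀ u ∈ zmultiples ((2 : ℝ) ^ m)⁻¹, x < u → u ≤ x + n → Halts x (none, some u) := by
  induction n with
  | zero =>
    intro u _ h₁ h₂
    rw [Nat.cast_zero, add_zero] at h₂
    exact absurd h₁ h₂.not_gt
  | succ n ih =>
    intro u hu h₁ h₂
    have hc : cand (none, some u) = u - 1 := rfl
    refine halts_of_cases (fun h => ?_) (fun h => ?_) <;> rw [hc] at h ⊢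
    · have := halts_bisect (by positivity) hx m _ (sub_mem hu (one_mem_zmultiples_inv_two_pow m)) h
        (by rwa [two_pow_mul_inv_two_pow, sub_add_cancel])
      rwa [two_pow_mul_inv_two_pow, sub_add_cancel] at this
    · exact ih _ (sub_mem hu (one_mem_zmultiples_inv_two_pow m)) h (by push_cast at h₂; linarith)

theorem halts_start {m : ℕ} (hx : x ∈ zmultiples ((2 : ℝ) ^ m)⁻¹) : Halts x (none, none) := by
  have hc : cand (none, none) = 0 := rfl
  refine halts_of_cases (fun h => ?_) (fun h => ?_) <;> rw [hc] at h ⊢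
  · exact halts_walk_up hx ⌈x⌉₊ 0 (zero_mem _) h (by simpa using Nat.le_ceil x)
  · exact halts_walk_down hx ⌈-x⌉₊ 0 (zero_mem _) h (by linarith [Nat.le_ceil (-x)])

theorem IsDyadic.mem_zmultiples (hx : IsDyadic x) : ∃ m : ℕ, x ∈ zmultiples ((2 : ℝ) ^ m)⁻¹ := by
  obtain ⟨k, m, rfl⟩ := hx
  exact ⟨m, mem_zmultiples_iff.2 ⟨k, by rw [zsmul_eq_mul, div_eq_mul_inv]⟩⟩

theorem IsDyadic.exists_cand_signState_eq (hx : IsDyadic x) : ∃ n, cand (signState x n) = x := by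
  obtain ⟨m, hm⟩ := hx.mem_zmultiples
  obtain ⟨n, hn⟩ := halts_start hm
  exact ⟨n, by rwa [signState_eq_iterate]⟩

structure IsHaltingStage (x : ℝ) (N : ℕ) : Prop where
  cand_eq : cand (signState x N) = x
  cand_ne : ∀ k < N, cand (signState x k) ≠ x

theorem IsDyadic.exists_isHaltingStage (hx : IsDyadic x) : ∃ N, IsHaltingStage x N := by
  have h := hx.exists_cand_signState_eq
  exact ⟨Nat.find h, Nat.find_spec h, fun _ => Nat.find_min h⟩

end Termination

section Continuity

theorem eventually_lt_iff_and_gt_iff {α : Type*} [TopologicalSpace α] [LinearOrder α]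
    [OrderTopology α] {c x : α} (hc : c ≠ x) :
    ∀ᶠ y in 𝓝 x, (c < x ↔ c < y) ∧ (x < c ↔ y < c) := by
  rcases hc.lt_or_gt with h | h
  · filter_upwards [lt_mem_nhds h] with y hy
    exact ⟨iff_of_true h hy, iff_of_false h.not_gt hy.not_gt⟩
  · filter_upwards [gt_mem_nhds h] with y hy
    exact ⟨iff_of_false h.not_gt hy.not_gt, iff_of_true h hy⟩

variable {x : ℝ}

theorem eventually_signState_eq {n : ℕ} (h : ∀ k < n, cand (signState x k) ≠ x) :
    ∀ᶠ y in 𝓝 x, signState y n = signState x n := by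
  induction n with
  | zero => exact .of_forall fun _ => rfl
  | succ n ih =>
    filter_upwards [ih fun k hk => h k (Nat.lt_succ_of_lt hk),
      eventually_lt_iff_and_gt_iff (h n n.lt_succ_self)] with y hst hside
    rw [signState_succ, signState_succ, hst]
    exact signStep_congr hside.1.symm hside.2.symm

theorem eventually_signAt_eq {n : ℕ} (h : ∀ k ≤ n, cand (signState x k) ≠ x) :
    ∀ᶠ y in 𝓝 x, signAt y n = signAt x n := by
  filter_upwards [eventually_signState_eq fun k hk => h k hk.le,
    eventually_lt_iff_and_gt_iff (h n le_rfl)] with y hst hside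
  exact (signAt_congr hst.symm hside.1 hside.2).symm

theorem signAt_add_eq_false {y l d : ℝ} (k : ℕ) :
    ∀ n, 0 < d → (signState y n).1 = some l → cand (signState y n) = l + d →
      y < l + d / 2 ^ k → signAt y (n + k) = some false := by
  induction k generalizing d with
  | zero =>
    intro n _ _ hc hy
    exact signAt_of_lt_cand (by simpa [hc] using hy)
  | succ k ih =>
    intro n hd hl hc hy
    have hy' : y < cand (signState y n) :=
      hc ▸ hy.trans_le (by gcongr; exact div_le_self hd.le (one_le_pow₀ one_le_two))
    have hnext : signState y (n + 1) = (some l, some (l + d)) := by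
      rw [signState_succ, signStep_of_lt_cand hy', hl, hc]
    rw [← add_assoc, add_right_comm]
    refine ih (n + 1) (half_pos hd) (by rw [hnext]) (by rw [hnext]; simp only [cand]; ring) ?_
    rwa [div_div, ← pow_succ']

variable {N : ℕ}

theorem eventually_signAt_eq_true (hN : IsHaltingStage x N) :
    ∀ᶠ y in 𝓝[>] x, signAt y N = some true := by
  filter_upwards [nhdsWithin_le_nhds (eventually_signState_eq hN.cand_ne), self_mem_nhdsWithin]
    with y hst (hxy : x < y)
  exact signAt_of_cand_lt (by rwa [hst, hN.cand_eq])

theorem eventually_signAt_eq_false (hN : IsHaltingStage x N) (k : ℕ) :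
    ∀ᶠ y in 𝓝[>] x, signAt y (N + 1 + k) = some false := by
  set d := cand (some x, (signState x N).2) - x
  have hd : 0 < d := by
    rcases hu : (signState x N).2 with _ | u
    · simp [d, hu, cand]
    · have := lt_of_signState_snd_eq_some hu
      simp only [d, hu, cand]; linarith
  filter_upwards [nhdsWithin_le_nhds (eventually_signState_eq hN.cand_ne), self_mem_nhdsWithin,
    nhdsWithin_le_nhds (eventually_lt_nhds (lt_add_of_pos_right x (by positivity : 0 < d / 2 ^ k)))]
    with y hst (hxy : x < y) hy
  have hnext : signState y (N + 1) = (some x, (signState x N).2) := by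
    rw [signState_succ, hst, signStep_of_cand_lt (by rwa [hN.cand_eq]), hN.cand_eq]
  exact signAt_add_eq_false k (N + 1) hd (by rw [hnext]) (by rw [hnext]; ring) hy

end Continuity

section Append

universe u

variable {x : ℝ} {N : ℕ}

theorem strLength_signExp (hN : IsHaltingStage x N) : strLength (signExp x) = N := by
  refine IsLeast.csInf_eq ⟨?_, ?_⟩
  · rw [Set.mem_ofPred_eq, signExp_natCast, signAt_eq_none_iff]
    exact hN.cand_eq
  · intro γ (hγ : signExp x γ = none)
    by_contra! hlt
    obtain ⟨k, rfl⟩ := lt_omega0.1 (hlt.trans (natCast_lt_omega0 N))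
    rw [signExp_natCast, signAt_eq_none_iff] at hγ
    exact hN.cand_ne k (by exact_mod_cast hlt) hγ

theorem oneOverOmega_natCast_succ (k : ℕ) : oneOverOmega ((k + 1 : ℕ) : Ordinal) = some false := by
  rw [oneOverOmega, if_neg (by exact_mod_cast k.succ_ne_zero), if_pos (natCast_lt_omega0 _)]

theorem strAppend_signExp_natCast_of_lt (hN : IsHaltingStage x N) {n : ℕ} (h : n < N) :
    strAppend (signExp x) oneOverOmega n = signAt x n := by
  rw [strAppend, strLength_signExp hN, if_pos (Nat.cast_lt.2 h), signExp_natCast]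

theorem strAppend_signExp_natCast_self (hN : IsHaltingStage x N) :
    strAppend (signExp x) oneOverOmega N = some true := by
  rw [strAppend, strLength_signExp hN, if_neg (lt_irrefl _), Ordinal.sub_self, oneOverOmega,
    if_pos rfl]

theorem strAppend_signExp_natCast_add (hN : IsHaltingStage x N) (k : ℕ) :
    strAppend (signExp x) oneOverOmega ((N + 1 + k : ℕ) : Ordinal) = some false := by
  rw [strAppend, strLength_signExp hN, if_neg (by exact_mod_cast (by omega : ¬ N + 1 + k < N)),
    ← natCast_sub, show N + 1 + k - N = k + 1 by omega, oneOverOmega_natCast_succ]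

theorem eventually_signExp_eq_strAppend (hN : IsHaltingStage x N) (n : ℕ) :
    ∀ᶠ y in 𝓝[>] x, signExp y n = strAppend (signExp x) oneOverOmega (n : Ordinal.{u}) ∧
      (strAppend (signExp x) oneOverOmega (n : Ordinal.{u})).isSome := by
  simp only [signExp_natCast]
  rcases lt_trichotomy n N with h | rfl | h
  · filter_upwards [nhdsWithin_le_nhds
      (eventually_signAt_eq fun k hk => hN.cand_ne k (hk.trans_lt h))] with y hy
    rw [strAppend_signExp_natCast_of_lt hN h]
    exact ⟨hy, Option.isSome_iff_ne_none.2 (signAt_eq_none_iff.not.2 (hN.cand_ne n h))⟩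
  · rw [strAppend_signExp_natCast_self hN]
    exact (eventually_signAt_eq_true hN).mono fun y hy => ⟨hy, rfl⟩
  · obtain ⟨k, rfl⟩ := Nat.exists_eq_add_of_lt h
    rw [add_right_comm, strAppend_signExp_natCast_add hN]
    exact (eventually_signAt_eq_false hN k).mono fun y hy => ⟨hy, rfl⟩

theorem strAppend_signExp_oneOverOmega_of_omega0_le (hN : IsHaltingStage x N) {γ : Ordinal}
    (hγ : ω ≤ γ) :
    strAppend (signExp x) oneOverOmega γ = none := by
  have hNγ : (N : Ordinal) ≤ γ := (natCast_lt_omega0 N).le.trans hγ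
  have hω : ω ≤ γ - N := le_sub_of_add_le (by rwa [natCast_add_omega0])
  rw [strAppend, strLength_signExp hN, if_neg hNγ.not_gt, oneOverOmega,
    if_neg (omega0_pos.trans_le hω).ne', if_neg hω.not_gt]

theorem eventually_forall_le_signExp_eq_strAppend (hN : IsHaltingStage x N) (n : ℕ) :
    ∀ᶠ y in 𝓝[>] x, ∀ γ ≤ (n : Ordinal.{u}), signExp y γ = strAppend (signExp x) oneOverOmega γ ∧
      (strAppend (signExp x) oneOverOmega γ).isSome := by
  filter_upwards [(eventually_all_finite (Set.finite_Iic n)).2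
    fun j _ => eventually_signExp_eq_strAppend hN j] with y hy γ hγ
  obtain ⟨j, rfl⟩ := lt_omega0.1 (hγ.trans_lt (natCast_lt_omega0 n))
  exact hy j (Nat.cast_le.1 hγ)

end Append

open Filter Topology in
/-- If a sequence of reals converges classically to a dyadic rational `x` and
`r n > x` for all but finitely many `n`, then the s-limit of the sign expansions is the sign
expansion of `x + 1/ω`, namely the (finite) expansion of `x` followed by one `+` and ω minuses. -/
theorem slim_signExp_of_tendsto_dyadic_from_above (r : ℕ → ℝ) (x : ℝ)
    (hconv : Tendsto r atTop (𝓝 x)) (hx : IsDyadic x)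
    (habove : ∀ᶠ n in atTop, x < r n) :
    slim (fun n => signExp (r n)) = strAppend (signExp x) oneOverOmega := by
  obtain ⟨N, hN⟩ := hx.exists_isHaltingStage
  have hr : Tendsto r atTop (𝓝[>] x) := tendsto_nhdsWithin_iff.2 ⟨hconv, habove⟩
  funext γ
  rcases lt_or_ge γ ω with hγ | hγ
  · obtain ⟨n, rfl⟩ := lt_omega0.1 hγ
    exact slim_apply_eq_of_eventually (hr.eventually
      (eventually_forall_le_signExp_eq_strAppend hN n))
  · rw [slim_apply_eq_none fun _ => signExp_of_omega0_le hγ,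
      strAppend_signExp_oneOverOmega_of_omega0_le hN hγ]
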